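/- Let n = dim V and let K₁, K₂ ⊆ 𝕋V be isotropic subspaces with dim K₁ = dim K₂ = k and K₁ ∩ K₂^⊥ ⊆ K₂. Let B̄₁ and B̄₂ be the induced nondegenerate symmetric bilinear forms on K₁^⊥/K₁ and K₂^⊥/K₂ respectively, with quotient maps q₁, q₂, and let R = {(q₁(e), q₂(e)) : e ∈ K₁^⊥ ∩ K₂^⊥} ⊆ (K₁^⊥/K₁) × (K₂^⊥/K₂). Let V₁⁺ ⊆ K₁^⊥/K₁ be a subspace of dimension n − k on which B̄₁ is positive definite, and set V₁⁻ = (V₁⁺)^⊥ with respect to B̄₁. Then there exists a unique subspace V₂⁺ ⊆ K₂^⊥/K₂ of dimension n − k on which B̄₂ is positive definite such that, setting V₂⁻ = (V₂⁺)^⊥ with respect to B̄₂, one has R = (R ∩ (V₁⁺ × V₂⁺)) + (R ∩ (V₁⁻ × V₂⁻)); i.e. the T-duality relation R is a generalised isometry between the generalised metrics V₁⁺ and V₂⁺. -/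

import Mathlib

/-- The hyperbolic pairing on the double `𝕋V = V × V*`:
`⟨(v, α), (w, β)⟩ = α(w) + β(v)`. -/
noncomputable def hyp (V : Type*) [AddCommGroup V] [Module ℝ V] :
    LinearMap.BilinForm ℝ (V × Module.Dual ℝ V) :=
  LinearMap.mk₂ ℝ (fun x y => x.2 y.1 + y.2 x.1)
    (fun x x' y => by
      simp only [Prod.fst_add, Prod.snd_add, LinearMap.add_apply, map_add]; ring)
    (fun c x y => by
      simp only [Prod.smul_fst, Prod.smul_snd, LinearMap.smul_apply, map_smul, smul_eq_mul]; ring)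
    (fun x y y' => by
      simp only [Prod.fst_add, Prod.snd_add, LinearMap.add_apply, map_add]; ring)
    (fun c x y => by
      simp only [Prod.smul_fst, Prod.smul_snd, LinearMap.smul_apply, map_smul, smul_eq_mul]; ring)

/-- The orthogonal complement `K^⊥` of a subspace `K` with respect to `B`. -/
noncomputable def orthB {E : Type*} [AddCommGroup E] [Module ℝ E]
    (B : LinearMap.BilinForm ℝ E) (K : Submodule ℝ E) : Submodule ℝ E :=
  LinearMap.BilinForm.orthogonal B K
/-- An isotropic `K`, regarded as a submodule of `K^⊥`. -/
noncomputable def Ksub {E : Type*} [AddCommGroup E] [Module ℝ E]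
    (B : LinearMap.BilinForm ℝ E) (K : Submodule ℝ E) : Submodule ℝ ↥(orthB B K) :=
  Submodule.comap (orthB B K).subtype K

/-- The reduced space `K^⊥/K`. -/
abbrev Red {E : Type*} [AddCommGroup E] [Module ℝ E]
    (B : LinearMap.BilinForm ℝ E) (K : Submodule ℝ E) :=
  ↥(orthB B K) ⧸ Ksub B K

/-- The quotient map `q : K^⊥ → K^⊥/K`. -/
noncomputable def qmap {E : Type*} [AddCommGroup E] [Module ℝ E]
    (B : LinearMap.BilinForm ℝ E) (K : Submodule ℝ E) :
    ↥(orthB B K) →ₗ[ℝ] Red B K :=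
  (Ksub B K).mkQ
/-- The map `L : K₁^⊥ ∩ K₂^⊥ → (K₁^⊥/K₁) × (K₂^⊥/K₂)`, `e ↦ (q₁(e), q₂(e))`. -/
noncomputable def Lmap {E : Type*} [AddCommGroup E] [Module ℝ E]
    (B : LinearMap.BilinForm ℝ E) (K₁ K₂ : Submodule ℝ E) :
    ↥(orthB B K₁ ⊓ orthB B K₂) →ₗ[ℝ] Red B K₁ × Red B K₂ :=
  LinearMap.prod
    (qmap B K₁ ∘ₗ Submodule.inclusion inf_le_left)
    (qmap B K₂ ∘ₗ Submodule.inclusion inf_le_right)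

/-!
On `W = K₁^⊥ ∩ K₂^⊥` the two quotient maps `q₁, q₂` have the same kernel `W ∩ K₁ = W ∩ K₂`:
the hypothesis `K₁ ∩ K₂^⊥ ⊆ K₂` implies the symmetric one `K₂ ∩ K₁^⊥ ⊆ K₁`, because
`dim (K₁ ∩ K₂^⊥) - dim K₁` is symmetric in `K₁, K₂`, so the inclusion `K₁ ∩ K₂^⊥ ⊆ K₂ ∩ K₁^⊥`
(`K₁` is isotropic) is an equality.
Moreover `W + K₁ = K₁^⊥` (its orthogonal is `(K₁ + K₂) ∩ K₁^⊥ = K₁`), so `q₁` is onto and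
`q₂ = φ ∘ q₁` for an injective isometry `φ`; that is, `R` is the graph of `φ`.

For the graph of an isometry, `V₂⁺ = φ(V₁⁺)` splits `R` as required, since `V₁⁺ ⊕ V₁⁻` is
everything and `φ(V₁⁻) ⊥ φ(V₁⁺)`. Conversely, splitting `(a, φ a)` for `a ∈ V₁⁺` shows that
its `V₁⁻ × V₂⁻` part has first component in `V₁⁺ ∩ V₁⁻ = 0`, hence vanishes, so `φ a ∈ V₂⁺`;
equal dimensions give uniqueness.
-/

open Module Function LinearMap
open LinearMap (BilinForm)

lemma hyp_apply {V : Type*} [AddCommGroup V] [Module ℝ V] (x y : V × Module.Dual ℝ V) :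
    hyp V x y = x.2 y.1 + y.2 x.1 := rfl

lemma hyp_isRefl (V : Type*) [AddCommGroup V] [Module ℝ V] : (hyp V).IsRefl := by
  intro x y h
  rw [hyp_apply] at h ⊢
  linarith

lemma hyp_nondegenerate (V : Type*) [AddCommGroup V] [Module ℝ V] [FiniteDimensional ℝ V] :
    (hyp V).Nondegenerate := by
  refine (hyp_isRefl V).nondegenerate_iff_separatingLeft.mpr fun x h => Prod.ext ?_ ?_
  · change x.1 = 0
    rw [← Module.forall_dual_apply_eq_zero_iff ℝ x.1]
    intro f
    simpa [hyp_apply] using h (0, f)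
  · ext w
    simpa [hyp_apply] using h (w, 0)

section Orthogonal

variable {E : Type*} [AddCommGroup E] [Module ℝ E] {B : BilinForm ℝ E}

lemma orthB_sup (A C : Submodule ℝ E) :
    orthB B (A ⊔ C) = orthB B A ⊓ orthB B C := by
  refine le_antisymm (le_inf (BilinForm.orthogonal_le le_sup_left)
    (BilinForm.orthogonal_le le_sup_right)) ?_
  rintro x ⟨hA, hC⟩ y hy
  obtain ⟨a, ha, c, hc, rfl⟩ := Submodule.mem_sup.mp hy
  change B (a + c) x = 0
  rw [map_add, LinearMap.add_apply, hA a ha, hC c hc, add_zero]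

variable [FiniteDimensional ℝ E]

lemma orthB_orthB (hB : B.Nondegenerate) (hB₀ : B.IsRefl) (A : Submodule ℝ E) :
    orthB B (orthB B A) = A :=
  BilinForm.orthogonal_orthogonal hB hB₀ A

lemma finrank_inf_orthB_add_finrank (hB : B.Nondegenerate) (hB₀ : B.IsRefl)
    (A C : Submodule ℝ E) :
    finrank ℝ ↥(A ⊓ orthB B C) + finrank ℝ C = finrank ℝ ↥(C ⊓ orthB B A) + finrank ℝ A := by
  have hsup := Submodule.finrank_sup_add_finrank_inf_eq A (orthB B C)
  have hC : finrank ℝ (orthB B C) = finrank ℝ E - finrank ℝ C :=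
    BilinForm.finrank_orthogonal hB C
  have hS : finrank ℝ ↥(C ⊓ orthB B A) = finrank ℝ E - finrank ℝ ↥(A ⊔ orthB B C) := by
    rw [← BilinForm.finrank_orthogonal hB, ← orthB, orthB_sup, orthB_orthB hB hB₀, inf_comm]
  have := Submodule.finrank_le C
  have := Submodule.finrank_le (A ⊔ orthB B C)
  omega

lemma inf_orthB_le_of_finrank_eq (hB : B.Nondegenerate) (hB₀ : B.IsRefl)
    {A C : Submodule ℝ E} (hA : A ≤ orthB B A) (hAC : finrank ℝ A = finrank ℝ C)
    (h : A ⊓ orthB B C ≤ C) : C ⊓ orthB B A ≤ A := by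
  have hle : A ⊓ orthB B C ≤ C ⊓ orthB B A := le_inf h (inf_le_left.trans hA)
  have := finrank_inf_orthB_add_finrank hB hB₀ A C
  rw [← Submodule.eq_of_le_of_finrank_le hle (by omega)]
  exact inf_le_left

lemma orthB_inf_orthB_sup_eq (hB : B.Nondegenerate) (hB₀ : B.IsRefl)
    {A C : Submodule ℝ E} (hA : A ≤ orthB B A) (h : C ⊓ orthB B A ≤ A) :
    orthB B A ⊓ orthB B C ⊔ A = orthB B A := by
  have hperp : orthB B (orthB B A ⊓ orthB B C ⊔ A) = A := by
    rw [← orthB_sup A C, orthB_sup, orthB_orthB hB hB₀, sup_inf_assoc_of_le _ hA]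
    exact sup_eq_left.mpr h
  rw [← orthB_orthB hB hB₀ (orthB B A ⊓ orthB B C ⊔ A), hperp]

end Orthogonal

section Reduction

variable {E : Type*} [AddCommGroup E] [Module ℝ E] {B : BilinForm ℝ E} {K : Submodule ℝ E}

lemma qmap_eq_zero_iff (e : orthB B K) : qmap B K e = 0 ↔ (e : E) ∈ K :=
  Submodule.Quotient.mk_eq_zero _

lemma isRefl_of_qmap (hB : B.IsRefl) {Bbar : BilinForm ℝ (Red B K)}
    (hBbar : ∀ e e' : orthB B K, Bbar (qmap B K e) (qmap B K e') = B e e') : Bbar.IsRefl := by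
  intro x y
  obtain ⟨e, rfl⟩ := Submodule.mkQ_surjective _ x
  obtain ⟨e', rfl⟩ := Submodule.mkQ_surjective _ y
  change Bbar (qmap B K e) (qmap B K e') = 0 → Bbar (qmap B K e') (qmap B K e) = 0
  rw [hBbar, hBbar]
  exact hB e e'

lemma surjective_qmap_comp_inclusion {W : Submodule ℝ E} (hW : W ≤ orthB B K)
    (hsup : W ⊔ K = orthB B K) : Surjective (qmap B K ∘ₗ Submodule.inclusion hW) := by
  intro x
  obtain ⟨e, rfl⟩ := Submodule.mkQ_surjective _ x
  have he : (e : E) ∈ W ⊔ K := hsup.symm ▸ e.2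
  obtain ⟨w, hw, y, hy, hwy⟩ := Submodule.mem_sup.mp he
  refine ⟨⟨w, hw⟩, (Submodule.Quotient.eq _).mpr ?_⟩
  change w - (e : E) ∈ K
  rw [← hwy, sub_add_cancel_left]
  exact neg_mem hy

end Reduction

section Factorisation

variable {R W X₁ X₂ : Type*} [CommRing R] [AddCommGroup W] [Module R W]
  [AddCommGroup X₁] [Module R X₁] [AddCommGroup X₂] [Module R X₂]
  {f₁ : W →ₗ[R] X₁} {f₂ : W →ₗ[R] X₂} {φ : X₁ →ₗ[R] X₂}

lemma LinearMap.exists_comp_eq_of_ker_le (hf₁ : Surjective f₁) (hker : ker f₁ ≤ ker f₂) :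
    ∃ φ : X₁ →ₗ[R] X₂, φ ∘ₗ f₁ = f₂ :=
  ⟨(ker f₁).liftQ f₂ hker ∘ₗ (f₁.quotKerEquivOfSurjective hf₁).symm, by ext w; simp⟩

lemma LinearMap.injective_of_comp_eq (hf₁ : Surjective f₁) (hφ : φ ∘ₗ f₁ = f₂)
    (hker : ker f₂ ≤ ker f₁) : Injective φ := by
  refine (injective_iff_map_eq_zero φ).mpr fun x hx => ?_
  obtain ⟨w, rfl⟩ := hf₁ x
  rw [← comp_apply, hφ] at hx
  exact hker hx

lemma LinearMap.range_prod_eq_graph (hf₁ : Surjective f₁) (hφ : φ ∘ₗ f₁ = f₂) :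
    range (f₁.prod f₂) = φ.graph := by
  subst hφ
  rw [graph_eq_range_prod, ← range_comp_of_range_eq_top _ (range_eq_top.mpr hf₁)]
  rfl

lemma LinearMap.isometry_of_comp_eq {B₁ : BilinForm R X₁} {B₂ : BilinForm R X₂}
    (hf₁ : Surjective f₁) (hφ : φ ∘ₗ f₁ = f₂)
    (h : ∀ w w', B₂ (f₂ w) (f₂ w') = B₁ (f₁ w) (f₁ w')) (x y : X₁) :
    B₂ (φ x) (φ y) = B₁ x y := by
  obtain ⟨w, rfl⟩ := hf₁ x
  obtain ⟨w', rfl⟩ := hf₁ y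
  subst hφ
  exact h w w'

end Factorisation

section TDuality

variable {E : Type*} [AddCommGroup E] [Module ℝ E] [FiniteDimensional ℝ E] {B : BilinForm ℝ E}
  {K₁ K₂ : Submodule ℝ E}

theorem exists_isometry_range_Lmap_eq_graph (hB : B.Nondegenerate) (hB₀ : B.IsRefl)
    (hK₁ : K₁ ≤ orthB B K₁) (hk : finrank ℝ K₁ = finrank ℝ K₂) (hcond : K₁ ⊓ orthB B K₂ ≤ K₂)
    {Bbar₁ : BilinForm ℝ (Red B K₁)} {Bbar₂ : BilinForm ℝ (Red B K₂)}
    (hBbar₁ : ∀ e e' : orthB B K₁, Bbar₁ (qmap B K₁ e) (qmap B K₁ e') = B e e')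
    (hBbar₂ : ∀ e e' : orthB B K₂, Bbar₂ (qmap B K₂ e) (qmap B K₂ e') = B e e') :
    ∃ φ : Red B K₁ →ₗ[ℝ] Red B K₂, Injective φ ∧ (∀ x y, Bbar₂ (φ x) (φ y) = Bbar₁ x y) ∧
      range (Lmap B K₁ K₂) = φ.graph := by
  set f₁ := qmap B K₁ ∘ₗ Submodule.inclusion (inf_le_left : orthB B K₁ ⊓ orthB B K₂ ≤ _)
  set f₂ := qmap B K₂ ∘ₗ Submodule.inclusion (inf_le_right : orthB B K₁ ⊓ orthB B K₂ ≤ _)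
  have hcond' : K₂ ⊓ orthB B K₁ ≤ K₁ := inf_orthB_le_of_finrank_eq hB hB₀ hK₁ hk hcond
  have hker : ker f₁ = ker f₂ := by
    ext w
    simp only [mem_ker, f₁, f₂, LinearMap.comp_apply, qmap_eq_zero_iff, Submodule.coe_inclusion]
    exact ⟨fun h => hcond ⟨h, w.2.2⟩, fun h => hcond' ⟨h, w.2.1⟩⟩
  have hf₁ : Surjective f₁ :=
    surjective_qmap_comp_inclusion _ (orthB_inf_orthB_sup_eq hB hB₀ hK₁ hcond')
  obtain ⟨φ, hφ⟩ := exists_comp_eq_of_ker_le hf₁ hker.le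
  exact ⟨φ, injective_of_comp_eq hf₁ hφ hker.ge,
    isometry_of_comp_eq hf₁ hφ fun w w' => by
      simp only [f₁, f₂, LinearMap.comp_apply, hBbar₁, hBbar₂, Submodule.coe_inclusion],
    range_prod_eq_graph hf₁ hφ⟩

end TDuality

section GeneralisedIsometry

variable {X₁ X₂ : Type*} [AddCommGroup X₁] [Module ℝ X₁] [AddCommGroup X₂] [Module ℝ X₂]
  {B₁ : BilinForm ℝ X₁} {B₂ : BilinForm ℝ X₂} {φ : X₁ →ₗ[ℝ] X₂} {V₁ : Submodule ℝ X₁}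

lemma disjoint_orthogonal_of_pos (hV₁ : ∀ x ∈ V₁, x ≠ 0 → 0 < B₁ x x) :
    Disjoint V₁ (B₁.orthogonal V₁) := by
  refine Submodule.disjoint_def.mpr fun x hx hx' => ?_
  by_contra hne
  exact (hV₁ x hx hne).ne' (hx' x hx)

lemma map_orthogonal_le_orthogonal_map (hφ : ∀ x y, B₂ (φ x) (φ y) = B₁ x y) :
    (B₁.orthogonal V₁).map φ ≤ B₂.orthogonal (V₁.map φ) := by
  rintro _ ⟨b, hb, rfl⟩ _ ⟨a, ha, rfl⟩
  rw [hφ]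
  exact hb a ha

lemma graph_eq_sup_inf_prod_map (hφ : ∀ x y, B₂ (φ x) (φ y) = B₁ x y)
    (hV₁ : Codisjoint V₁ (B₁.orthogonal V₁)) :
    φ.graph = φ.graph ⊓ V₁.prod (V₁.map φ) ⊔
      φ.graph ⊓ (B₁.orthogonal V₁).prod (B₂.orthogonal (V₁.map φ)) := by
  refine le_antisymm ?_ (sup_le inf_le_left inf_le_left)
  rintro ⟨x, _⟩ (rfl : _ = φ x)
  obtain ⟨a, ha, b, hb, rfl⟩ := Submodule.mem_sup.mp (hV₁.eq_top ▸ Submodule.mem_top : x ∈ _)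
  have hsplit : (a + b, φ (a + b)) = (a, φ a) + (b, φ b) := by rw [map_add]; rfl
  rw [hsplit]
  exact Submodule.add_mem_sup ⟨rfl, ha, Submodule.mem_map_of_mem ha⟩
    ⟨rfl, hb, map_orthogonal_le_orthogonal_map hφ (Submodule.mem_map_of_mem hb)⟩

lemma map_le_of_graph_eq_sup (hV₁ : Disjoint V₁ (B₁.orthogonal V₁)) {V₂ V₂' : Submodule ℝ X₂}
    (h : φ.graph = φ.graph ⊓ V₁.prod V₂ ⊔ φ.graph ⊓ (B₁.orthogonal V₁).prod V₂') :
    V₁.map φ ≤ V₂ := by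
  rintro _ ⟨a, ha, rfl⟩
  have hmem : (a, φ a) ∈ φ.graph := rfl
  rw [h] at hmem
  obtain ⟨u, ⟨-, hu₁, hu₂⟩, w, ⟨hw, hw₁, -⟩, huw⟩ := Submodule.mem_sup.mp hmem
  have hw₁0 : w.1 = 0 := by
    refine Submodule.disjoint_def.mp hV₁ _ ?_ hw₁
    rw [eq_sub_of_add_eq' (congrArg Prod.fst huw)]
    exact sub_mem ha hu₁
  have hw0 : w = 0 := Prod.ext hw₁0 (hw.trans (by rw [hw₁0, map_zero]; rfl))
  rw [hw0, add_zero] at huw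
  subst huw
  exact hu₂

theorem existsUnique_graph_eq_sup_inf_prod [FiniteDimensional ℝ X₁] [FiniteDimensional ℝ X₂]
    (hB₁ : B₁.IsRefl) (hφinj : Injective φ) (hφ : ∀ x y, B₂ (φ x) (φ y) = B₁ x y)
    (hV₁ : ∀ x ∈ V₁, x ≠ 0 → 0 < B₁ x x) :
    ∃! V₂ : Submodule ℝ X₂, finrank ℝ V₂ = finrank ℝ V₁ ∧ (∀ x ∈ V₂, x ≠ 0 → 0 < B₂ x x) ∧
      φ.graph = φ.graph ⊓ V₁.prod V₂ ⊔ φ.graph ⊓ (B₁.orthogonal V₁).prod (B₂.orthogonal V₂) := by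
  have hcompl : IsCompl V₁ (B₁.orthogonal V₁) :=
    (BilinForm.isCompl_orthogonal_iff_disjoint hB₁).mpr (disjoint_orthogonal_of_pos hV₁)
  refine ⟨V₁.map φ, ⟨?_, ?_, graph_eq_sup_inf_prod_map hφ hcompl.codisjoint⟩, ?_⟩
  · exact (Submodule.equivMapOfInjective φ hφinj V₁).finrank_eq.symm
  · rintro _ ⟨a, ha, rfl⟩ hne
    rw [hφ]
    exact hV₁ a ha (ne_of_apply_ne φ (by rwa [map_zero]))
  · rintro V₂ ⟨hdim, -, h⟩
    refine (Submodule.eq_of_le_of_finrank_le (map_le_of_graph_eq_sup hcompl.disjoint h) ?_).symm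
    rw [hdim]
    exact (Submodule.equivMapOfInjective φ hφinj V₁).finrank_eq.le

end GeneralisedIsometry

theorem stmt19_general (V : Type*) [AddCommGroup V] [Module ℝ V] [FiniteDimensional ℝ V] (k : ℕ)
    (K₁ K₂ : Submodule ℝ (V × Module.Dual ℝ V))
    (hK₁ : K₁ ≤ orthB (hyp V) K₁)
    (hk₁ : Module.finrank ℝ K₁ = k) (hk₂ : Module.finrank ℝ K₂ = k)
    (hcond : K₁ ⊓ orthB (hyp V) K₂ ≤ K₂)
    (Bbar₁ : LinearMap.BilinForm ℝ (Red (hyp V) K₁))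
    (hBbar₁ : ∀ e e' : ↥(orthB (hyp V) K₁),
      Bbar₁ (qmap (hyp V) K₁ e) (qmap (hyp V) K₁ e')
        = hyp V (e : V × Module.Dual ℝ V) (e' : V × Module.Dual ℝ V))
    (Bbar₂ : LinearMap.BilinForm ℝ (Red (hyp V) K₂))
    (hBbar₂ : ∀ e e' : ↥(orthB (hyp V) K₂),
      Bbar₂ (qmap (hyp V) K₂ e) (qmap (hyp V) K₂ e')
        = hyp V (e : V × Module.Dual ℝ V) (e' : V × Module.Dual ℝ V))
    (V₁p : Submodule ℝ (Red (hyp V) K₁))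
    (hV₁dim : Module.finrank ℝ V₁p = Module.finrank ℝ V - k)
    (hV₁pos : ∀ x ∈ V₁p, x ≠ 0 → 0 < Bbar₁ x x) :
    ∃! V₂p : Submodule ℝ (Red (hyp V) K₂),
      Module.finrank ℝ V₂p = Module.finrank ℝ V - k ∧
      (∀ x ∈ V₂p, x ≠ 0 → 0 < Bbar₂ x x) ∧
      LinearMap.range (Lmap (hyp V) K₁ K₂)
        = (LinearMap.range (Lmap (hyp V) K₁ K₂) ⊓ Submodule.prod V₁p V₂p)
          ⊔ (LinearMap.range (Lmap (hyp V) K₁ K₂)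
              ⊓ Submodule.prod (LinearMap.BilinForm.orthogonal Bbar₁ V₁p)
                  (LinearMap.BilinForm.orthogonal Bbar₂ V₂p)) := by
  obtain ⟨φ, hφinj, hφ, hR⟩ := exists_isometry_range_Lmap_eq_graph (hyp_nondegenerate V)
    (hyp_isRefl V) hK₁ (hk₁.trans hk₂.symm) hcond hBbar₁ hBbar₂
  rw [hR, ← hV₁dim]
  exact existsUnique_graph_eq_sup_inf_prod (isRefl_of_qmap (hyp_isRefl V) hBbar₁) hφinj hφ hV₁pos

/-- Fibrewise geometric T-duality: given isotropic `K₁, K₂ ⊆ 𝕋V` of dimension `k` with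
`K₁ ∩ K₂^⊥ ⊆ K₂`, and a generalised metric `V₁⁺` on the reduction `K₁^⊥/K₁`, there is a unique
generalised metric `V₂⁺` on `K₂^⊥/K₂` such that the T-duality relation `R` is a generalised
isometry between `V₁⁺` and `V₂⁺`. -/
theorem stmt19 (V : Type*) [AddCommGroup V] [Module ℝ V] [FiniteDimensional ℝ V] (k : ℕ)
    (K₁ K₂ : Submodule ℝ (V × Module.Dual ℝ V))
    (hK₁ : K₁ ≤ orthB (hyp V) K₁) (hK₂ : K₂ ≤ orthB (hyp V) K₂)
    (hk₁ : Module.finrank ℝ K₁ = k) (hk₂ : Module.finrank ℝ K₂ = k)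
    (hcond : K₁ ⊓ orthB (hyp V) K₂ ≤ K₂)
    (Bbar₁ : LinearMap.BilinForm ℝ (Red (hyp V) K₁))
    (hBbar₁ : ∀ e e' : ↥(orthB (hyp V) K₁),
      Bbar₁ (qmap (hyp V) K₁ e) (qmap (hyp V) K₁ e')
        = hyp V (e : V × Module.Dual ℝ V) (e' : V × Module.Dual ℝ V))
    (Bbar₂ : LinearMap.BilinForm ℝ (Red (hyp V) K₂))
    (hBbar₂ : ∀ e e' : ↥(orthB (hyp V) K₂),
      Bbar₂ (qmap (hyp V) K₂ e) (qmap (hyp V) K₂ e')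
        = hyp V (e : V × Module.Dual ℝ V) (e' : V × Module.Dual ℝ V))
    (V₁p : Submodule ℝ (Red (hyp V) K₁))
    (hV₁dim : Module.finrank ℝ V₁p = Module.finrank ℝ V - k)
    (hV₁pos : ∀ x ∈ V₁p, x ≠ 0 → 0 < Bbar₁ x x) :
    ∃! V₂p : Submodule ℝ (Red (hyp V) K₂),
      Module.finrank ℝ V₂p = Module.finrank ℝ V - k ∧
      (∀ x ∈ V₂p, x ≠ 0 → 0 < Bbar₂ x x) ∧
      LinearMap.range (Lmap (hyp V) K₁ K₂)
        = (LinearMap.range (Lmap (hyp V) K₁ K₂) ⊓ Submodule.prod V₁p V₂p)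
          ⊔ (LinearMap.range (Lmap (hyp V) K₁ K₂)
              ⊓ Submodule.prod (LinearMap.BilinForm.orthogonal Bbar₁ V₁p)
                  (LinearMap.BilinForm.orthogonal Bbar₂ V₂p)) :=
  stmt19_general V k K₁ K₂ hK₁ hk₁ hk₂ hcond Bbar₁ hBbar₁ Bbar₂ hBbar₂ V₁p hV₁dim hV₁pos
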